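/- arXiv:2006.04622 — 6 statements merged into one kernel-verified Lean document; each statement's English description precedes it below -/
import Mathlib

section
/- Let m be a real number, s > 0 and ε > 0. If Z is distributed according to the Gaussian measure N(m, s²) on ℝ, then ∫ sign(z − ε·sign(z))·(z − m) dN(m,s²)(z) = s·√(2/π)·(exp(−(ε+m)²/(2s²)) + exp(−(ε−m)²/(2s²)) − exp(−m²/(2s²))). -/
/-! The density `φ` of `N(μ, v)` satisfies `(x - μ) φ(x) = -v φ'(x)`, so
`∫_{x > a} (x - μ) dN(μ, v) = v φ(a)`, while `x - μ` has mean zero. Off the null set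
`{-ε, 0, ε}` the factor `sign(z - ε sign z)` equals `2 (1_{z > -ε} - 1_{z > 0} + 1_{z > ε}) - 1`,
so for `v = s²` the integral is `2 s² (φ(-ε) - φ(0) + φ(ε))`. -/

open MeasureTheory ProbabilityTheory Set Filter Topology
open scoped NNReal

namespace ProbabilityTheory

lemma hasDerivAt_gaussianPDFReal (μ : ℝ) (v : ℝ≥0) (x : ℝ) :
    HasDerivAt (gaussianPDFReal μ v) (-(x - μ) / v * gaussianPDFReal μ v x) x := by
  refine ((((((hasDerivAt_id' x).sub_const μ).fun_pow 2).fun_neg.div_const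
    (2 * (v : ℝ))).exp.const_mul (√(2 * Real.pi * v))⁻¹)).congr_deriv ?_
  rw [gaussianPDFReal]
  ring

lemma tendsto_gaussianPDFReal_atTop (μ : ℝ) (v : ℝ≥0) :
    Tendsto (gaussianPDFReal μ v) atTop (𝓝 0) := by
  rcases eq_or_ne v 0 with rfl | hv
  · rw [gaussianPDFReal_zero_var]
    exact tendsto_const_nhds
  have h : Tendsto (fun x => (x - μ) ^ 2 / (2 * v)) atTop atTop :=
    ((tendsto_pow_atTop two_ne_zero).comp
      (tendsto_atTop_add_const_right _ (-μ) tendsto_id)).atTop_div_const (by positivity)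
  simpa [gaussianPDFReal_def, neg_div] using
    (Real.tendsto_exp_atBot.comp (tendsto_neg_atTop_atBot.comp h)).const_mul
      (√(2 * Real.pi * v))⁻¹

lemma integrable_id_gaussianReal (μ : ℝ) (v : ℝ≥0) :
    Integrable (fun x => x) (gaussianReal μ v) :=
  (memLp_id_gaussianReal 1).integrable le_rfl

lemma integrable_sub_gaussianReal (μ : ℝ) (v : ℝ≥0) :
    Integrable (fun x => x - μ) (gaussianReal μ v) :=
  (integrable_id_gaussianReal μ v).sub (integrable_const μ)

lemma integral_sub_gaussianReal (μ : ℝ) (v : ℝ≥0) :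
    ∫ x, (x - μ) ∂gaussianReal μ v = 0 := by
  rw [integral_sub (integrable_id_gaussianReal μ v) (integrable_const μ)]
  simp [integral_id_gaussianReal]

lemma setIntegral_Ioi_sub_gaussianReal (μ : ℝ) (v : ℝ≥0) (a : ℝ) :
    ∫ x in Ioi a, (x - μ) ∂gaussianReal μ v = v * gaussianPDFReal μ v a := by
  rcases eq_or_ne v 0 with rfl | hv
  · rw [gaussianReal_zero_var, gaussianPDFReal_zero_var]
    refine (integral_eq_zero_of_ae (ae_restrict_of_ae ?_)).trans (zero_mul _).symm
    simp [ae_dirac_eq]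
  have hpdf (x : ℝ) : (gaussianPDF μ v x).toReal = gaussianPDFReal μ v x := toReal_gaussianPDF x
  have hint : Integrable (fun x => gaussianPDFReal μ v x • (x - μ)) := by
    have h := integrable_sub_gaussianReal μ v
    rw [gaussianReal_of_var_ne_zero μ hv, integrable_withDensity_iff_integrable_smul'
      (measurable_gaussianPDF μ v) (ae_of_all _ fun _ => gaussianPDF_lt_top)] at h
    simpa only [hpdf] using h
  have hderiv (x : ℝ) : HasDerivAt (fun x => -(v * gaussianPDFReal μ v x))
      (gaussianPDFReal μ v x • (x - μ)) x := by
    refine ((hasDerivAt_gaussianPDFReal μ v x).const_mul (v : ℝ)).neg.congr_deriv ?_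
    have hv' : (v : ℝ) ≠ 0 := NNReal.coe_ne_zero.2 hv
    rw [smul_eq_mul]
    field_simp
  rw [gaussianReal_of_var_ne_zero μ hv, setIntegral_withDensity_eq_setIntegral_toReal_smul
    (measurable_gaussianPDF μ v) (ae_of_all _ fun _ => gaussianPDF_lt_top) _ measurableSet_Ioi]
  simp only [hpdf]
  rw [integral_Ioi_of_hasDerivAt_of_tendsto' (fun x _ => hderiv x) hint.integrableOn
    (by simpa using ((tendsto_gaussianPDFReal_atTop μ v).const_mul (v : ℝ)).neg)]
  ring

lemma var_mul_gaussianPDFReal (μ : ℝ) (v : ℝ≥0) (x : ℝ) :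
    v * gaussianPDFReal μ v x = √(v / (2 * Real.pi)) * Real.exp (-(x - μ) ^ 2 / (2 * v)) := by
  rcases eq_or_ne v 0 with rfl | hv
  · simp
  have hv' : (0 : ℝ) < v := by positivity
  rw [gaussianPDFReal, ← mul_assoc, show (v : ℝ) / (2 * Real.pi) = v ^ 2 / (2 * Real.pi * v) by
    field_simp, Real.sqrt_div (sq_nonneg _), Real.sqrt_sq hv'.le]
  ring

end ProbabilityTheory

lemma sign_sub_mul_sign_mul_eq_indicator {ε z : ℝ} (hε : 0 < ε)
    (hz : z ∉ ({-ε, 0, ε} : Set ℝ)) (f : ℝ → ℝ) :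
    Real.sign (z - ε * Real.sign z) * f z
      = 2 * ((Ioi (-ε)).indicator f z - (Ioi 0).indicator f z + (Ioi ε).indicator f z)
        - f z := by
  simp only [mem_insert_iff, mem_singleton_iff, not_or] at hz
  obtain ⟨hz₁, hz₂, hz₃⟩ := hz
  simp only [Real.sign, indicator_apply, mem_Ioi]
  rcases lt_or_gt_of_ne hz₁ with h₁ | h₁ <;> rcases lt_or_gt_of_ne hz₂ with h₂ | h₂ <;>
    rcases lt_or_gt_of_ne hz₃ with h₃ | h₃ <;> split_ifs <;> first | (exfalso; linarith) | ring

/-- For `Z ~ N(m, s²)` and `ε > 0`,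
`∫ sign(z − ε·sign(z))·(z − m) dN(m,s²)(z)
  = s·√(2/π)·(exp(−(ε+m)²/(2s²)) + exp(−(ε−m)²/(2s²)) − exp(−m²/(2s²)))`. -/
theorem gaussian_shrunk_sign_integral (m s ε : ℝ) (hs : 0 < s) (hε : 0 < ε) :
    ∫ z, Real.sign (z - ε * Real.sign z) * (z - m) ∂(gaussianReal m ⟨s ^ 2, sq_nonneg s⟩)
      = s * Real.sqrt (2 / Real.pi) *
        (Real.exp (-(ε + m) ^ 2 / (2 * s ^ 2)) + Real.exp (-(ε - m) ^ 2 / (2 * s ^ 2))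
          - Real.exp (-(m ^ 2) / (2 * s ^ 2))) := by
  set v : ℝ≥0 := ⟨s ^ 2, sq_nonneg s⟩
  have hv : v ≠ 0 := by
    rw [ne_eq, ← NNReal.coe_eq_zero]
    exact (pow_pos hs 2).ne'
  have := nullSingletonClass_gaussianReal (μ := m) hv
  have hf := integrable_sub_gaussianReal m v
  have hI (a : ℝ) := hf.indicator (measurableSet_Ioi (a := a))
  rw [integral_congr_ae (((toFinite {-ε, 0, ε}).countable.ae_notMem _).mono
      fun z hz => sign_sub_mul_sign_mul_eq_indicator hε hz (· - m)),
    integral_sub ?_ hf, integral_const_mul, integral_add ?_ (hI _), integral_sub (hI _) (hI _)]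
  · simp only [integral_indicator measurableSet_Ioi, setIntegral_Ioi_sub_gaussianReal,
      integral_sub_gaussianReal, var_mul_gaussianPDFReal]
    have hconst : 2 * √(s ^ 2 / (2 * Real.pi)) = s * √(2 / Real.pi) := by
      rw [show s ^ 2 / (2 * Real.pi) = (s / 2) ^ 2 * (2 / Real.pi) by field_simp,
        Real.sqrt_mul (sq_nonneg _), Real.sqrt_sq (by positivity)]
      ring
    rw [← hconst, show (v : ℝ) = s ^ 2 from rfl, show (-ε - m) ^ 2 = (ε + m) ^ 2 by ring,
      show (0 - m) ^ 2 = m ^ 2 by ring]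
    ring
  · exact (hI _).sub (hI _)
  · exact (((hI _).sub (hI _)).add (hI _)).const_mul 2
end

section
/- Let d be a positive integer and μ, σ, γ > 0. If ε > 2μ, then there exists exactly one real number n₀ > 0 such that r_rob(n₀, ε) = 0, and this root satisfies 2σ²·log 2 / (ε(ε + 2μ)) < n₀ < 2σ²·log 2 / (ε(ε − 2μ)). -/
/-!
Since `(ε ± μ)² = μ² + ε(ε ± 2μ)`, the bracket in `r_rob(n, ε)` factors as
`exp(-nμ²/(2σ²)) · (exp(-nA) + exp(-nB) - 1)` with `A = ε(ε + 2μ)/(2σ²) > B = ε(ε - 2μ)/(2σ²) > 0`.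
The sum `exp(-nA) + exp(-nB)` is continuous and strictly decreasing in `n`; at `n = log 2 / A`
its first term is `1/2` and its second exceeds `1/2`, while at `n = log 2 / B` the roles swap.
So it takes the value `1` exactly once, strictly between these two points.
-/

open Real

noncomputable def expNegSum (a b n : ℝ) : ℝ := exp (-(n * a)) + exp (-(n * b))

section expNegSum

variable {a b : ℝ}

lemma strictAnti_expNegSum (ha : 0 < a) (hb : 0 < b) : StrictAnti (expNegSum a b) :=
  fun _ _ hxy => add_lt_add (exp_lt_exp.2 (by nlinarith)) (exp_lt_exp.2 (by nlinarith))

lemma continuous_expNegSum : Continuous (expNegSum a b) := by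
  unfold expNegSum
  fun_prop

lemma log_two_div_mul_lt_log_two (hb : 0 < b) (hba : b < a) : log 2 / a * b < log 2 := by
  rw [div_mul_eq_mul_div, div_lt_iff₀ (hb.trans hba)]
  exact mul_lt_mul_of_pos_left hba (log_pos one_lt_two)

lemma log_two_lt_log_two_div_mul (hb : 0 < b) (hba : b < a) : log 2 < log 2 / b * a := by
  rw [div_mul_eq_mul_div, lt_div_iff₀ hb]
  exact mul_lt_mul_of_pos_left hba (log_pos one_lt_two)

lemma one_lt_expNegSum_log_two_div (hb : 0 < b) (hba : b < a) :
    1 < expNegSum a b (log 2 / a) := by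
  have h : exp (-log 2) < exp (-(log 2 / a * b)) :=
    exp_lt_exp.2 (neg_lt_neg (log_two_div_mul_lt_log_two hb hba))
  rw [exp_neg (log 2), exp_log two_pos] at h
  rw [expNegSum, div_mul_cancel₀ _ (hb.trans hba).ne', exp_neg (log 2), exp_log two_pos]
  linarith

lemma expNegSum_log_two_div_lt_one (hb : 0 < b) (hba : b < a) :
    expNegSum a b (log 2 / b) < 1 := by
  have h : exp (-(log 2 / b * a)) < exp (-log 2) :=
    exp_lt_exp.2 (neg_lt_neg (log_two_lt_log_two_div_mul hb hba))
  rw [exp_neg (log 2), exp_log two_pos] at h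
  rw [expNegSum, div_mul_cancel₀ _ hb.ne', exp_neg (log 2), exp_log two_pos]
  linarith

lemma log_two_div_lt_of_expNegSum_eq_one (hb : 0 < b) (hba : b < a) {n : ℝ}
    (hn : expNegSum a b n = 1) : log 2 / a < n ∧ n < log 2 / b := by
  have hanti := strictAnti_expNegSum (hb.trans hba) hb
  exact ⟨hanti.lt_iff_gt.1 (hn ▸ one_lt_expNegSum_log_two_div hb hba),
    hanti.lt_iff_gt.1 (hn ▸ expNegSum_log_two_div_lt_one hb hba)⟩

lemma existsUnique_pos_expNegSum_eq_one (hb : 0 < b) (hba : b < a) :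
    ∃! n, 0 < n ∧ expNegSum a b n = 1 := by
  have hanti := strictAnti_expNegSum (hb.trans hba) hb
  have hlo := one_lt_expNegSum_log_two_div hb hba
  have hhi := expNegSum_log_two_div_lt_one hb hba
  obtain ⟨n, hn, hn_eq⟩ :=
    intermediate_value_Icc' (hanti.lt_iff_gt.1 (hhi.trans hlo)).le
      continuous_expNegSum.continuousOn ⟨hhi.le, hlo.le⟩
  have hpos : 0 < n := (div_pos (log_pos one_lt_two) (hb.trans hba)).trans_le hn.1
  exact ⟨n, ⟨hpos, hn_eq⟩, fun m hm => hanti.injective (hm.2.trans hn_eq.symm)⟩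

end expNegSum

noncomputable def robLossGap (d : ℕ) (μ σ γ ε n : ℝ) : ℝ :=
  d * γ * σ * √(2 / (n * π)) *
    (exp (-(n * (ε + μ) ^ 2) / (2 * σ ^ 2)) + exp (-(n * (ε - μ) ^ 2) / (2 * σ ^ 2)) -
      exp (-(n * μ ^ 2) / (2 * σ ^ 2)))

lemma robLossGap_eq (d : ℕ) (μ σ γ ε n : ℝ) :
    robLossGap d μ σ γ ε n = d * γ * σ * √(2 / (n * π)) * exp (-(n * μ ^ 2) / (2 * σ ^ 2)) *
      (expNegSum (ε * (ε + 2 * μ) / (2 * σ ^ 2)) (ε * (ε - 2 * μ) / (2 * σ ^ 2)) n - 1) := by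
  have hplus : -(n * (ε + μ) ^ 2) / (2 * σ ^ 2) =
      -(n * μ ^ 2) / (2 * σ ^ 2) + -(n * (ε * (ε + 2 * μ) / (2 * σ ^ 2))) := by ring
  have hminus : -(n * (ε - μ) ^ 2) / (2 * σ ^ 2) =
      -(n * μ ^ 2) / (2 * σ ^ 2) + -(n * (ε * (ε - 2 * μ) / (2 * σ ^ 2))) := by ring
  rw [robLossGap, expNegSum, hplus, hminus, exp_add, exp_add]
  ring

lemma robLossGap_eq_zero_iff {d : ℕ} {μ σ γ ε n : ℝ} (hd : 0 < d) (hσ : 0 < σ) (hγ : 0 < γ)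
    (hn : 0 < n) :
    robLossGap d μ σ γ ε n = 0 ↔
      expNegSum (ε * (ε + 2 * μ) / (2 * σ ^ 2)) (ε * (ε - 2 * μ) / (2 * σ ^ 2)) n = 1 := by
  have hprefactor : 0 < d * γ * σ * √(2 / (n * π)) * exp (-(n * μ ^ 2) / (2 * σ ^ 2)) := by
    positivity
  rw [robLossGap_eq, mul_eq_zero, sub_eq_zero, or_iff_right hprefactor.ne']

/-- If `ε > 2μ`, there is exactly one real `n₀ > 0` with `r_rob(n₀, ε) = 0`, and it
satisfies `2σ²·log 2/(ε(ε+2μ)) < n₀ < 2σ²·log 2/(ε(ε−2μ))`. -/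
theorem r_rob_unique_root (d : ℕ) (hd : 0 < d) (μ σ γ ε : ℝ)
    (hμ : 0 < μ) (hσ : 0 < σ) (hγ : 0 < γ) (hε : 2 * μ < ε) :
    (∃! n₀ : ℝ, 0 < n₀ ∧
      d * γ * σ * Real.sqrt (2 / (n₀ * Real.pi)) *
        (Real.exp (-(n₀ * (ε + μ) ^ 2) / (2 * σ ^ 2)) +
          Real.exp (-(n₀ * (ε - μ) ^ 2) / (2 * σ ^ 2)) -
          Real.exp (-(n₀ * μ ^ 2) / (2 * σ ^ 2))) = 0) ∧
    ∀ n₀ : ℝ, 0 < n₀ →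
      d * γ * σ * Real.sqrt (2 / (n₀ * Real.pi)) *
        (Real.exp (-(n₀ * (ε + μ) ^ 2) / (2 * σ ^ 2)) +
          Real.exp (-(n₀ * (ε - μ) ^ 2) / (2 * σ ^ 2)) -
          Real.exp (-(n₀ * μ ^ 2) / (2 * σ ^ 2))) = 0 →
      2 * σ ^ 2 * Real.log 2 / (ε * (ε + 2 * μ)) < n₀ ∧
        n₀ < 2 * σ ^ 2 * Real.log 2 / (ε * (ε - 2 * μ)) := by
  show (∃! n₀, 0 < n₀ ∧ robLossGap d μ σ γ ε n₀ = 0) ∧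
    ∀ n₀, 0 < n₀ → robLossGap d μ σ γ ε n₀ = 0 → _
  have hε₀ : 0 < ε := by linarith
  have hσ₂ : 0 < 2 * σ ^ 2 := by positivity
  have hB : 0 < ε * (ε - 2 * μ) / (2 * σ ^ 2) := div_pos (mul_pos hε₀ (by linarith)) hσ₂
  have hBA : ε * (ε - 2 * μ) / (2 * σ ^ 2) < ε * (ε + 2 * μ) / (2 * σ ^ 2) :=
    div_lt_div_of_pos_right (by nlinarith) hσ₂
  have hroot (n : ℝ) (hn : 0 < n) := robLossGap_eq_zero_iff (μ := μ) (ε := ε) hd hσ hγ hn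
  refine ⟨(existsUnique_congr fun n => ?_).2 (existsUnique_pos_expNegSum_eq_one hB hBA),
    fun n hn h0 => ?_⟩
  · exact and_congr_right (hroot n)
  · simpa only [div_div_eq_mul_div, mul_comm (log 2)] using
      log_two_div_lt_of_expNegSum_eq_one hB hBA ((hroot n hn).1 h0)
end

section
/- Let d be a positive integer and μ, σ, γ > 0, and suppose ε > 2μ. Let n₀ > 0 be the unique positive real root of n ↦ r_rob(n, ε). Then there exists n₁ > n₀ such that r_rob(n₁, ε) ≤ r_rob(n, ε) for every real n > 0, and moreover r_rob(n₁, ε) < 0. -/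
open Filter Set

lemma aux_min_exists (f : ℝ → ℝ) (n₀ : ℝ) (hn₀ : 0 < n₀)
    (hcont : ContinuousOn f (Set.Ioi 0))
    (hroot : f n₀ = 0)
    (hpos : ∀ n, 0 < n → n < n₀ → 0 < f n)
    (p : ℝ) (hp : n₀ < p) (hfp : f p < 0)
    (htop : Filter.Tendsto f Filter.atTop (nhds 0)) :
    ∃ n₁, n₀ < n₁ ∧ (∀ n, 0 < n → f n₁ ≤ f n) ∧ f n₁ < 0 := by
  have hev : ∀ᶠ n in atTop, f p < f n := htop.eventually_const_lt hfp
  obtain ⟨M, hM⟩ := hev.exists_forall_of_atTop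
  set M' := max M p with hM'def
  have hpM' : p ≤ M' := le_max_right _ _
  have hn₀M' : n₀ ≤ M' := le_of_lt (lt_of_lt_of_le hp hpM')
  have hsub : Icc n₀ M' ⊆ Ioi 0 := fun x hx => lt_of_lt_of_le hn₀ hx.1
  obtain ⟨n₁, hn₁mem, hmin⟩ := isCompact_Icc.exists_isMinOn
    (Set.nonempty_Icc.mpr hn₀M') (hcont.mono hsub)
  have hmin' : ∀ x ∈ Icc n₀ M', f n₁ ≤ f x := fun x hx => hmin hx
  have h1 : f n₁ ≤ f p := hmin' p ⟨le_of_lt hp, hpM'⟩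
  have hneg : f n₁ < 0 := lt_of_le_of_lt h1 hfp
  have hn₁gt : n₀ < n₁ := by
    rcases eq_or_lt_of_le hn₁mem.1 with h | h
    · exfalso; rw [← h, hroot] at hneg; exact lt_irrefl 0 hneg
    · exact h
  refine ⟨n₁, hn₁gt, ?_, hneg⟩
  intro n hn
  rcases lt_or_ge n n₀ with h | h
  · exact le_of_lt (lt_trans hneg (hpos n hn h))
  · rcases le_or_gt n M' with h2 | h2
    · exact hmin' n ⟨h, h2⟩
    · have : f p < f n := hM n (le_trans (le_max_left _ _) (le_of_lt h2))
      linarith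

/-- If `ε > 2μ` and `n₀ > 0` is the unique positive real root of `n ↦ r_rob(n, ε)`,
then there exists `n₁ > n₀` at which `r_rob(·, ε)` attains its minimum over `(0, ∞)`,
and this minimum value is negative. -/
theorem r_rob_min_after_root (d : ℕ) (hd : 0 < d) (μ σ γ ε : ℝ)
    (hμ : 0 < μ) (hσ : 0 < σ) (hγ : 0 < γ) (hε : 2 * μ < ε)
    (n₀ : ℝ) (hn₀ : 0 < n₀)
    (hroot : d * γ * σ * Real.sqrt (2 / (n₀ * Real.pi)) *
        (Real.exp (-(n₀ * (ε + μ) ^ 2) / (2 * σ ^ 2)) +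
          Real.exp (-(n₀ * (ε - μ) ^ 2) / (2 * σ ^ 2)) -
          Real.exp (-(n₀ * μ ^ 2) / (2 * σ ^ 2))) = 0)
    (huniq : ∀ n : ℝ, 0 < n →
      d * γ * σ * Real.sqrt (2 / (n * Real.pi)) *
        (Real.exp (-(n * (ε + μ) ^ 2) / (2 * σ ^ 2)) +
          Real.exp (-(n * (ε - μ) ^ 2) / (2 * σ ^ 2)) -
          Real.exp (-(n * μ ^ 2) / (2 * σ ^ 2))) = 0 → n = n₀) :
    ∃ n₁ : ℝ, n₀ < n₁ ∧
      (∀ n : ℝ, 0 < n →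
        d * γ * σ * Real.sqrt (2 / (n₁ * Real.pi)) *
          (Real.exp (-(n₁ * (ε + μ) ^ 2) / (2 * σ ^ 2)) +
            Real.exp (-(n₁ * (ε - μ) ^ 2) / (2 * σ ^ 2)) -
            Real.exp (-(n₁ * μ ^ 2) / (2 * σ ^ 2))) ≤
        d * γ * σ * Real.sqrt (2 / (n * Real.pi)) *
          (Real.exp (-(n * (ε + μ) ^ 2) / (2 * σ ^ 2)) +
            Real.exp (-(n * (ε - μ) ^ 2) / (2 * σ ^ 2)) -
            Real.exp (-(n * μ ^ 2) / (2 * σ ^ 2)))) ∧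
      d * γ * σ * Real.sqrt (2 / (n₁ * Real.pi)) *
        (Real.exp (-(n₁ * (ε + μ) ^ 2) / (2 * σ ^ 2)) +
          Real.exp (-(n₁ * (ε - μ) ^ 2) / (2 * σ ^ 2)) -
          Real.exp (-(n₁ * μ ^ 2) / (2 * σ ^ 2))) < 0 := by
  have hπ : (0:ℝ) < Real.pi := Real.pi_pos
  have hd' : (0:ℝ) < d := by exact_mod_cast hd
  have hεμ : 0 < ε - μ := by linarith
  have hs : (0:ℝ) < 2 * σ ^ 2 := by positivity
  have hε0 : (0:ℝ) < ε := by linarith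
  have hApos : (0:ℝ) < (ε + μ) ^ 2 := pow_pos (by linarith) 2
  have hBpos : (0:ℝ) < (ε - μ) ^ 2 := pow_pos hεμ 2
  have hCpos : (0:ℝ) < μ ^ 2 := pow_pos hμ 2
  have hBC : (0:ℝ) < (ε - μ) ^ 2 - μ ^ 2 := by nlinarith
  set G : ℝ → ℝ := fun n => Real.exp (-(n * (ε + μ) ^ 2) / (2 * σ ^ 2)) +
      Real.exp (-(n * (ε - μ) ^ 2) / (2 * σ ^ 2)) -
      Real.exp (-(n * μ ^ 2) / (2 * σ ^ 2)) with hGdef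
  set F : ℝ → ℝ := fun n => ↑d * γ * σ * Real.sqrt (2 / (n * Real.pi)) * G n with hFdef
  have hGcont : Continuous G := by
    rw [hGdef]; fun_prop
  have hKpos : ∀ n : ℝ, 0 < n → 0 < (d:ℝ) * γ * σ * Real.sqrt (2 / (n * Real.pi)) := by
    intro n hn
    have h1 : 0 < Real.sqrt (2 / (n * Real.pi)) := Real.sqrt_pos.mpr (by positivity)
    positivity
  have hGroot : G n₀ = 0 := by
    rcases mul_eq_zero.mp hroot with h | h
    · exact absurd h (ne_of_gt (hKpos n₀ hn₀))
    · exact h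
  have hGuniq : ∀ n : ℝ, 0 < n → G n = 0 → n = n₀ := by
    intro n hn h
    exact huniq n hn (by rw [show (d:ℝ) * γ * σ * Real.sqrt (2 / (n * Real.pi)) *
      (Real.exp (-(n * (ε + μ) ^ 2) / (2 * σ ^ 2)) +
        Real.exp (-(n * (ε - μ) ^ 2) / (2 * σ ^ 2)) -
        Real.exp (-(n * μ ^ 2) / (2 * σ ^ 2))) =
      (d:ℝ) * γ * σ * Real.sqrt (2 / (n * Real.pi)) * G n from rfl, h, mul_zero])
  have hG0 : G 0 = 1 := by norm_num [hGdef]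
  have hGpos : ∀ n : ℝ, 0 < n → n < n₀ → 0 < G n := by
    intro n hn hlt
    by_contra hcon
    push_neg at hcon
    have hne : G n ≠ 0 := fun h => absurd (hGuniq n hn h) (ne_of_lt hlt)
    have hgn : G n < 0 := lt_of_le_of_ne hcon hne
    have hsub := intermediate_value_Icc' (le_of_lt hn) hGcont.continuousOn
    have hmem : (0:ℝ) ∈ Icc (G n) (G 0) := ⟨le_of_lt hgn, by rw [hG0]; norm_num⟩
    obtain ⟨x, hx, hgx⟩ := hsub hmem
    have hx0 : 0 < x := by
      rcases eq_or_lt_of_le hx.1 with h | h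
      · exfalso; rw [← h, hG0] at hgx; norm_num at hgx
      · exact h
    have := hGuniq x hx0 hgx
    have := hx.2
    linarith
  -- the point p where G is negative
  set p : ℝ := max n₀ (2 * σ ^ 2 * Real.log 2 / ((ε - μ) ^ 2 - μ ^ 2)) + 1 with hpdef
  have hp : n₀ < p := lt_of_le_of_lt (le_max_left _ _) (lt_add_one _)
  have hp0 : 0 < p := lt_trans hn₀ hp
  have hp2 : 2 * σ ^ 2 * Real.log 2 / ((ε - μ) ^ 2 - μ ^ 2) < p :=
    lt_of_le_of_lt (le_max_right _ _) (lt_add_one _)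
  have key1 : Real.exp (-(p * (ε + μ) ^ 2) / (2 * σ ^ 2)) ≤
      Real.exp (-(p * (ε - μ) ^ 2) / (2 * σ ^ 2)) := by
    apply Real.exp_le_exp.mpr
    apply (div_le_div_iff_of_pos_right hs).mpr
    nlinarith [mul_pos hp0 (mul_pos hε0 hμ)]
  have key2 : 2 * Real.exp (-(p * (ε - μ) ^ 2) / (2 * σ ^ 2)) <
      Real.exp (-(p * μ ^ 2) / (2 * σ ^ 2)) := by
    have e2 : (2:ℝ) * Real.exp (-(p * (ε - μ) ^ 2) / (2 * σ ^ 2)) =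
        Real.exp (Real.log 2 + -(p * (ε - μ) ^ 2) / (2 * σ ^ 2)) := by
      rw [Real.exp_add, Real.exp_log two_pos]
    rw [e2]
    apply Real.exp_lt_exp.mpr
    have h := (div_lt_iff₀ hBC).mp hp2
    have h2 : Real.log 2 < (p * (ε - μ) ^ 2 - p * μ ^ 2) / (2 * σ ^ 2) := by
      rw [lt_div_iff₀ hs]
      nlinarith
    have h3 : -(p * μ ^ 2) / (2 * σ ^ 2) - (-(p * (ε - μ) ^ 2) / (2 * σ ^ 2)) =
        (p * (ε - μ) ^ 2 - p * μ ^ 2) / (2 * σ ^ 2) := by ring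
    linarith
  have hGp : G p < 0 := by
    have : G p = Real.exp (-(p * (ε + μ) ^ 2) / (2 * σ ^ 2)) +
        Real.exp (-(p * (ε - μ) ^ 2) / (2 * σ ^ 2)) -
        Real.exp (-(p * μ ^ 2) / (2 * σ ^ 2)) := rfl
    rw [this]; linarith
  have hFp : F p < 0 := mul_neg_of_pos_of_neg (hKpos p hp0) hGp
  have hFpos : ∀ n : ℝ, 0 < n → n < n₀ → 0 < F n := fun n hn hlt =>
    mul_pos (hKpos n hn) (hGpos n hn hlt)
  have hFcont : ContinuousOn F (Set.Ioi 0) := by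
    have hsqrt : ContinuousOn (fun n : ℝ => Real.sqrt (2 / (n * Real.pi))) (Set.Ioi 0) :=
      Real.continuous_sqrt.comp_continuousOn
        (ContinuousOn.div continuousOn_const
          ((continuous_id.mul continuous_const).continuousOn)
          (fun n hn => mul_ne_zero (ne_of_gt hn) (ne_of_gt hπ)))
    exact (continuousOn_const.mul hsqrt).mul hGcont.continuousOn
  have htop : Filter.Tendsto F Filter.atTop (nhds 0) := by
    have h1 : Tendsto (fun n : ℝ => n * Real.pi) atTop atTop :=
      Tendsto.atTop_mul_const hπ tendsto_id
    have h2 : Tendsto (fun n : ℝ => 2 / (n * Real.pi)) atTop (nhds 0) :=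
      Tendsto.div_atTop tendsto_const_nhds h1
    have h3 : Tendsto (fun n : ℝ => Real.sqrt (2 / (n * Real.pi))) atTop (nhds 0) :=
      Real.sqrt_zero ▸ (Real.continuous_sqrt.tendsto 0).comp h2
    have hterm : ∀ c : ℝ, 0 < c →
        Tendsto (fun n : ℝ => Real.exp (-(n * c) / (2 * σ ^ 2))) atTop (nhds 0) := by
      intro c hc
      have hneg : -(c / (2 * σ ^ 2)) < 0 := by
        have : 0 < c / (2 * σ ^ 2) := by positivity
        linarith
      have h4 : Tendsto (fun n : ℝ => n * (-(c / (2 * σ ^ 2)))) atTop atBot :=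
        Tendsto.atTop_mul_const_of_neg hneg tendsto_id
      have h5 : Tendsto (fun n : ℝ => -(n * c) / (2 * σ ^ 2)) atTop atBot := by
        have heq : (fun n : ℝ => -(n * c) / (2 * σ ^ 2)) =
            fun n : ℝ => n * (-(c / (2 * σ ^ 2))) := by funext n; ring
        rw [heq]; exact h4
      exact Real.tendsto_exp_atBot.comp h5
    have hGtop : Tendsto G atTop (nhds 0) := by
      have := ((hterm _ hApos).add (hterm _ hBpos)).sub (hterm _ hCpos)
      simpa [hGdef] using this
    have hc : Tendsto (fun _ : ℝ => (d:ℝ) * γ * σ) atTop (nhds ((d:ℝ) * γ * σ)) :=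
      tendsto_const_nhds
    have := (hc.mul h3).mul hGtop
    simpa [hFdef] using this
  exact aux_min_exists F n₀ hn₀ hFcont hroot hFpos p hp hFp htop
end

section
/- Let d be a positive integer and μ, σ, γ > 0, and let 0 < ε < μ. For a real number n > 0, consider the derivative of the map e ↦ r_rob(n, e) at e = ε. If 0 < n < (σ²/(2με))·log((μ+ε)/(μ−ε)), then this derivative is strictly negative, and if n > (σ²/(2με))·log((μ+ε)/(μ−ε)), then this derivative is strictly positive. -/
/-!
Differentiating, the derivative of `e ↦ r_rob(n, e)` at `ε` is a positive multiple of
`(μ - ε)·exp B - (μ + ε)·exp A`, where `A = -n(ε+μ)²/(2σ²)` and `B = -n(ε-μ)²/(2σ²)`.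
Since `B - A = 2nμε/σ²`, this is negative exactly when `2nμε/σ² < log((μ+ε)/(μ-ε))`, i.e. when
`n` lies below the threshold, and positive exactly when it lies above.
-/

open Real

lemma hasDerivAt_exp_neg_mul_sq_div (n a c x : ℝ) :
    HasDerivAt (fun e : ℝ => exp (-(n * (e + a) ^ 2) / c))
      (exp (-(n * (x + a) ^ 2) / c) * (-(2 * n * (x + a)) / c)) x := by
  have hsq : HasDerivAt (fun e : ℝ => (e + a) ^ 2) (2 * (x + a)) x := by
    simpa using ((hasDerivAt_id x).add_const a).fun_pow 2
  have hexponent : HasDerivAt (fun e : ℝ => -(n * (e + a) ^ 2) / c) (-(n * (2 * (x + a))) / c) x :=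
    (hsq.const_mul n).neg.div_const c
  convert hexponent.exp using 1
  ring

lemma hasDerivAt_exp_add_exp_sub_const (K n μ c x : ℝ) :
    HasDerivAt (fun e : ℝ => K * (exp (-(n * (e + μ) ^ 2) / c) +
        exp (-(n * (e - μ) ^ 2) / c) - exp (-(n * μ ^ 2) / c)))
      (2 * K * n / c * ((μ - x) * exp (-(n * (x - μ) ^ 2) / c) -
        (μ + x) * exp (-(n * (x + μ) ^ 2) / c))) x := by
  have hminus := hasDerivAt_exp_neg_mul_sq_div n (-μ) c x
  simp only [← sub_eq_add_neg] at hminus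
  refine ((((hasDerivAt_exp_neg_mul_sq_div n μ c x).add hminus).sub_const
    (exp (-(n * μ ^ 2) / c))).const_mul K).congr_deriv ?_
  ring

lemma mul_exp_lt_mul_exp_iff {p q : ℝ} (hp : 0 < p) (hq : 0 < q) (a b : ℝ) :
    p * exp a < q * exp b ↔ a - b < log (q / p) := by
  rw [lt_log_iff_exp_lt (div_pos hq hp), lt_div_iff₀ hp, exp_sub,
    div_mul_eq_mul_div, div_lt_iff₀ (exp_pos b), mul_comm p]

theorem r_rob_deriv_sign_small_eps_general (d : ℕ) (hd : 0 < d) (μ σ γ ε : ℝ)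
    (hσ : 0 < σ) (hγ : 0 < γ) (hε0 : 0 < ε) (hεμ : ε < μ) (n : ℝ) :
    (0 < n → n < σ ^ 2 / (2 * μ * ε) * Real.log ((μ + ε) / (μ - ε)) →
      deriv (fun e : ℝ => d * γ * σ * Real.sqrt (2 / (n * Real.pi)) *
        (Real.exp (-(n * (e + μ) ^ 2) / (2 * σ ^ 2)) +
          Real.exp (-(n * (e - μ) ^ 2) / (2 * σ ^ 2)) -
          Real.exp (-(n * μ ^ 2) / (2 * σ ^ 2)))) ε < 0) ∧
    (n > σ ^ 2 / (2 * μ * ε) * Real.log ((μ + ε) / (μ - ε)) →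
      0 < deriv (fun e : ℝ => d * γ * σ * Real.sqrt (2 / (n * Real.pi)) *
        (Real.exp (-(n * (e + μ) ^ 2) / (2 * σ ^ 2)) +
          Real.exp (-(n * (e - μ) ^ 2) / (2 * σ ^ 2)) -
          Real.exp (-(n * μ ^ 2) / (2 * σ ^ 2)))) ε) := by
  have hminus : 0 < μ - ε := by linarith
  have hplus : 0 < μ + ε := by linarith
  have hμε : 0 < 2 * μ * ε := by nlinarith
  set L := log ((μ + ε) / (μ - ε))
  have hL : 0 < L := log_pos ((one_lt_div hminus).mpr (by linarith))
  set A := -(n * (ε + μ) ^ 2) / (2 * σ ^ 2)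
  set B := -(n * (ε - μ) ^ 2) / (2 * σ ^ 2)
  have hgap : B - A = n * (2 * μ * ε) / σ ^ 2 := by
    simp only [A, B]; field_simp; ring
  rw [(hasDerivAt_exp_add_exp_sub_const _ n μ _ ε).deriv]
  have hfactor (hn : 0 < n) : 0 < 2 * (d * γ * σ * √(2 / (n * π))) * n / (2 * σ ^ 2) := by
    have : 0 < √(2 / (n * π)) := sqrt_pos.mpr (by positivity)
    positivity
  constructor
  · intro hn hbelow
    have hBA : B - A < L := by
      rw [div_mul_eq_mul_div, lt_div_iff₀ hμε] at hbelow
      rw [hgap, div_lt_iff₀ (by positivity)]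
      linarith
    refine mul_neg_of_pos_of_neg (hfactor hn) (sub_neg.mpr ?_)
    exact (mul_exp_lt_mul_exp_iff hminus hplus B A).mpr hBA
  · intro habove
    have hn : 0 < n := lt_trans (mul_pos (by positivity) hL) habove
    have hBA : L < B - A := by
      rw [gt_iff_lt, div_mul_eq_mul_div, div_lt_iff₀ hμε] at habove
      rw [hgap, lt_div_iff₀ (by positivity)]
      linarith
    refine mul_pos (hfactor hn) (sub_pos.mpr ?_)
    rw [mul_exp_lt_mul_exp_iff hplus hminus A B, ← inv_div, log_inv]
    linarith

/-- For `0 < ε < μ`, the derivative of `e ↦ r_rob(n, e)` at `e = ε` is negative when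
`0 < n < (σ²/(2με))·log((μ+ε)/(μ−ε))` and positive when
`n > (σ²/(2με))·log((μ+ε)/(μ−ε))`. -/
theorem r_rob_deriv_sign_small_eps (d : ℕ) (hd : 0 < d) (μ σ γ ε : ℝ)
    (hμ : 0 < μ) (hσ : 0 < σ) (hγ : 0 < γ) (hε0 : 0 < ε) (hεμ : ε < μ) (n : ℝ) :
    (0 < n → n < σ ^ 2 / (2 * μ * ε) * Real.log ((μ + ε) / (μ - ε)) →
      deriv (fun e : ℝ => d * γ * σ * Real.sqrt (2 / (n * Real.pi)) *
        (Real.exp (-(n * (e + μ) ^ 2) / (2 * σ ^ 2)) +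
          Real.exp (-(n * (e - μ) ^ 2) / (2 * σ ^ 2)) -
          Real.exp (-(n * μ ^ 2) / (2 * σ ^ 2)))) ε < 0) ∧
    (n > σ ^ 2 / (2 * μ * ε) * Real.log ((μ + ε) / (μ - ε)) →
      0 < deriv (fun e : ℝ => d * γ * σ * Real.sqrt (2 / (n * Real.pi)) *
        (Real.exp (-(n * (e + μ) ^ 2) / (2 * σ ^ 2)) +
          Real.exp (-(n * (e - μ) ^ 2) / (2 * σ ^ 2)) -
          Real.exp (-(n * μ ^ 2) / (2 * σ ^ 2)))) ε) :=
  r_rob_deriv_sign_small_eps_general d hd μ σ γ ε hσ hγ hε0 hεμ n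
end

section
/- Let d be a positive integer and μ, σ, γ > 0, and let n > 0 be a real number. For every ε with μ < ε < 2μ, the derivative of the map e ↦ r_rob(n, e) at e = ε is strictly negative; consequently, for fixed n, the map ε ↦ r_rob(n, ε) is strictly decreasing on the open interval (μ, 2μ). -/
open Real

lemma exp_term_hasDerivAt (n σ a : ℝ) (ε : ℝ) :
    HasDerivAt (fun e : ℝ => Real.exp (-(n * (e + a) ^ 2) / (2 * σ ^ 2)))
      (Real.exp (-(n * (ε + a) ^ 2) / (2 * σ ^ 2)) * (-(n * (2 * (ε + a))) / (2 * σ ^ 2))) ε := by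
  have h1 : HasDerivAt (fun e : ℝ => e + a) 1 ε := (hasDerivAt_id ε).add_const a
  have h2 : HasDerivAt (fun e : ℝ => (e + a) ^ 2) (2 * (ε + a) ^ 1 * 1) ε := h1.pow 2
  have h3 : HasDerivAt (fun e : ℝ => -(n * (e + a) ^ 2) / (2 * σ ^ 2))
      (-(n * (2 * (ε + a) ^ 1 * 1)) / (2 * σ ^ 2)) ε := ((h2.const_mul n).neg).div_const _
  have := h3.exp
  convert this using 1
  ring

/-- For any fixed real `n > 0` and every `ε ∈ (μ, 2μ)`, the derivative of
`e ↦ r_rob(n, e)` at `e = ε` is negative; consequently `ε ↦ r_rob(n, ε)` is strictly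
decreasing on `(μ, 2μ)`. -/
theorem r_rob_deriv_neg_mid_eps (d : ℕ) (hd : 0 < d) (μ σ γ : ℝ)
    (hμ : 0 < μ) (hσ : 0 < σ) (hγ : 0 < γ) (n : ℝ) (hn : 0 < n) :
    (∀ ε : ℝ, μ < ε → ε < 2 * μ →
      deriv (fun e : ℝ => d * γ * σ * Real.sqrt (2 / (n * Real.pi)) *
        (Real.exp (-(n * (e + μ) ^ 2) / (2 * σ ^ 2)) +
          Real.exp (-(n * (e - μ) ^ 2) / (2 * σ ^ 2)) -
          Real.exp (-(n * μ ^ 2) / (2 * σ ^ 2)))) ε < 0) ∧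
    StrictAntiOn
      (fun e : ℝ => d * γ * σ * Real.sqrt (2 / (n * Real.pi)) *
        (Real.exp (-(n * (e + μ) ^ 2) / (2 * σ ^ 2)) +
          Real.exp (-(n * (e - μ) ^ 2) / (2 * σ ^ 2)) -
          Real.exp (-(n * μ ^ 2) / (2 * σ ^ 2))))
      (Set.Ioo μ (2 * μ)) := by
  set c : ℝ := d * γ * σ * Real.sqrt (2 / (n * Real.pi)) with hc
  have hcpos : 0 < c := by
    apply mul_pos
    · positivity
    · apply Real.sqrt_pos.mpr
      positivity
  have hder : ∀ ε : ℝ, HasDerivAt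
      (fun e : ℝ => c * (Real.exp (-(n * (e + μ) ^ 2) / (2 * σ ^ 2)) +
          Real.exp (-(n * (e - μ) ^ 2) / (2 * σ ^ 2)) -
          Real.exp (-(n * μ ^ 2) / (2 * σ ^ 2))))
      (c * (Real.exp (-(n * (ε + μ) ^ 2) / (2 * σ ^ 2)) * (-(n * (2 * (ε + μ))) / (2 * σ ^ 2)) +
        Real.exp (-(n * (ε - μ) ^ 2) / (2 * σ ^ 2)) * (-(n * (2 * (ε - μ))) / (2 * σ ^ 2)))) ε := by
    intro ε
    have h1 := exp_term_hasDerivAt n σ μ ε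
    have h2 := exp_term_hasDerivAt n σ (-μ) ε
    simp only [← sub_eq_add_neg] at h2
    exact (((h1.add h2).sub_const _).const_mul c)
  have hneg : ∀ ε : ℝ, μ < ε → ε < 2 * μ →
      c * (Real.exp (-(n * (ε + μ) ^ 2) / (2 * σ ^ 2)) * (-(n * (2 * (ε + μ))) / (2 * σ ^ 2)) +
        Real.exp (-(n * (ε - μ) ^ 2) / (2 * σ ^ 2)) * (-(n * (2 * (ε - μ))) / (2 * σ ^ 2))) < 0 := by
    intro ε h1 h2
    have hpm : 0 < ε + μ := by linarith
    have hmm : 0 < ε - μ := by linarith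
    have t1 : Real.exp (-(n * (ε + μ) ^ 2) / (2 * σ ^ 2)) * (-(n * (2 * (ε + μ))) / (2 * σ ^ 2)) < 0 := by
      apply mul_neg_of_pos_of_neg (Real.exp_pos _)
      apply div_neg_of_neg_of_pos
      · nlinarith
      · positivity
    have t2 : Real.exp (-(n * (ε - μ) ^ 2) / (2 * σ ^ 2)) * (-(n * (2 * (ε - μ))) / (2 * σ ^ 2)) < 0 := by
      apply mul_neg_of_pos_of_neg (Real.exp_pos _)
      apply div_neg_of_neg_of_pos
      · nlinarith
      · positivity
    exact mul_neg_of_pos_of_neg hcpos (by linarith)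
  constructor
  · intro ε h1 h2
    rw [(hder ε).deriv]
    exact hneg ε h1 h2
  · apply StrictAntiOn.mono (s := Set.Ioo μ (2*μ))
    · apply strictAntiOn_of_deriv_neg (convex_Ioo _ _)
      · exact fun x _ => ((hder x).differentiableAt).continuousAt.continuousWithinAt
      · intro x hx
        rw [interior_Ioo] at hx
        rw [(hder x).deriv]
        exact hneg x hx.1 hx.2
    · exact le_refl _
end

section
/- Let d be a positive integer and μ, σ, γ > 0. If 0 < ε < μ and n is a real number with n > (σ²/(2με))·log((μ+ε)/(μ−ε)), then r_rob(n, ε) > r_std(n); that is, d·γ·σ·√(2/(nπ))·(exp(−n(ε+μ)²/(2σ²)) + exp(−n(ε−μ)²/(2σ²)) − exp(−nμ²/(2σ²))) > d·γ·σ·√(2/(nπ))·exp(−nμ²/(2σ²)). -/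
/-!
With `κ = n / (2σ²)` the claim reads `g(ε) > g(0)` for
`g(t) = exp(-κ(t+μ)²) + exp(-κ(t-μ)²)`. The sign of `g'(t)` is that of
`(μ-t) exp(4κμt) - (μ+t)`, i.e. of `4κμt - log((μ+t)/(μ-t))`. The bound on `n` makes this
positive at `t = ε`, and since `t ↦ log((μ+t)/(μ-t))` is convex on `[0, μ)` and vanishes at `0`,
it stays positive on all of `(0, ε]`, so `g` is strictly increasing on `[0, ε]`.
-/

open Real Set

lemma convexOn_log_add_sub_log_sub (μ : ℝ) :
    ConvexOn ℝ (Ico 0 μ) (fun t => log (μ + t) - log (μ - t)) := by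
  have hplus (t : ℝ) : HasDerivAt (fun s => μ + s) 1 t := (hasDerivAt_id t).const_add μ
  have hminus (t : ℝ) : HasDerivAt (fun s => μ - s) (-1) t := by
    simpa using (hasDerivAt_id t).const_sub μ
  refine convexOn_of_hasDerivWithinAt2_nonneg (convex_Ico 0 μ)
    (f' := fun t => (μ + t)⁻¹ + (μ - t)⁻¹) (f'' := fun t => ((μ - t) ^ 2)⁻¹ - ((μ + t) ^ 2)⁻¹)
    ?_ ?_ ?_ ?_
  · refine ContinuousOn.sub (ContinuousOn.log (by fun_prop) fun t ht => ?_)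
      (ContinuousOn.log (by fun_prop) fun t ht => ?_) <;> linarith [ht.1, ht.2]
  all_goals
    intro t ht
    rw [interior_Ico] at ht
    have hpos : 0 < μ + t := by linarith [ht.1, ht.2]
    have hneg : 0 < μ - t := by linarith [ht.1, ht.2]
  · exact (((hplus t).log hpos.ne').sub ((hminus t).log hneg.ne')).hasDerivWithinAt.congr_deriv
      (by ring)
  · exact (((hplus t).inv hpos.ne').add ((hminus t).inv hneg.ne')).hasDerivWithinAt.congr_deriv
      (by ring)
  · simpa using inv_anti₀ (by positivity) (by nlinarith [ht.1] : (μ - t) ^ 2 ≤ (μ + t) ^ 2)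

lemma log_add_div_sub_lt_of_le {μ ε t c : ℝ} (ht₀ : 0 < t) (htε : t ≤ ε) (hεμ : ε < μ)
    (hε : log ((μ + ε) / (μ - ε)) < c * ε) : log ((μ + t) / (μ - t)) < c * t := by
  have hsecant := (convexOn_log_add_sub_log_sub μ).secant_mono (a := 0) (x := t) (y := ε)
    ⟨le_rfl, by linarith⟩ ⟨ht₀.le, by linarith⟩ ⟨by linarith, hεμ⟩ ht₀.ne' (by linarith) htε
  simp only [add_zero, sub_zero, sub_self] at hsecant
  rw [log_div (by linarith) (by linarith)] at hε ⊢
  calc log (μ + t) - log (μ - t)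
      ≤ (log (μ + ε) - log (μ - ε)) / ε * t := (div_le_iff₀ ht₀).1 hsecant
    _ < c * t := by gcongr; rwa [div_lt_iff₀ (by linarith)]

noncomputable def gaussPair (κ μ t : ℝ) : ℝ := exp (-(κ * (t + μ) ^ 2)) + exp (-(κ * (t - μ) ^ 2))

lemma gaussPair_zero (κ μ : ℝ) : gaussPair κ μ 0 = 2 * exp (-(κ * μ ^ 2)) := by
  simp only [gaussPair, zero_add, zero_sub, neg_sq]
  ring

lemma hasDerivAt_gaussPair (κ μ t : ℝ) :
    HasDerivAt (gaussPair κ μ)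
      (2 * κ * ((μ - t) * exp (-(κ * (t - μ) ^ 2)) - (μ + t) * exp (-(κ * (t + μ) ^ 2)))) t := by
  have hplus := ((((hasDerivAt_id t).add_const μ).pow 2).const_mul κ).neg.exp
  have hminus := ((((hasDerivAt_id t).sub_const μ).pow 2).const_mul κ).neg.exp
  exact (hplus.add hminus).congr_deriv (by simp only [id, Pi.neg_apply, Pi.pow_apply]; ring)

lemma add_mul_exp_lt_sub_mul_exp {κ μ t : ℝ} (ht₁ : -μ < t) (ht₂ : t < μ)
    (hlog : log ((μ + t) / (μ - t)) < 4 * κ * μ * t) :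
    (μ + t) * exp (-(κ * (t + μ) ^ 2)) < (μ - t) * exp (-(κ * (t - μ) ^ 2)) := by
  have hratio : (μ + t) / (μ - t) < exp (4 * κ * μ * t) :=
    (log_lt_iff_lt_exp (div_pos (by linarith) (by linarith))).1 hlog
  have hexp : exp (-(κ * (t - μ) ^ 2)) = exp (4 * κ * μ * t) * exp (-(κ * (t + μ) ^ 2)) := by
    rw [← exp_add]
    ring_nf
  rw [hexp, ← mul_assoc]
  gcongr
  rwa [div_lt_iff₀' (by linarith)] at hratio

lemma strictMonoOn_gaussPair {κ μ ε : ℝ} (hκ : 0 < κ) (hεμ : ε < μ)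
    (hlog : log ((μ + ε) / (μ - ε)) < 4 * κ * μ * ε) : StrictMonoOn (gaussPair κ μ) (Icc 0 ε) := by
  refine strictMonoOn_of_hasDerivWithinAt_pos (convex_Icc 0 ε)
    (fun t _ => (hasDerivAt_gaussPair κ μ t).continuousAt.continuousWithinAt)
    (fun t _ => (hasDerivAt_gaussPair κ μ t).hasDerivWithinAt) fun t ht => ?_
  rw [interior_Icc] at ht
  have hlog_t := log_add_div_sub_lt_of_le ht.1 ht.2.le hεμ hlog
  exact mul_pos (by positivity)
    (sub_pos.2 (add_mul_exp_lt_sub_mul_exp (by linarith [ht.1, ht.2]) (by linarith [ht.2]) hlog_t))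

theorem r_rob_gt_r_std_general (d : ℕ) (hd : 0 < d) (μ σ γ ε : ℝ)
    (hσ : 0 < σ) (hγ : 0 < γ) (hε0 : 0 < ε) (hεμ : ε < μ)
    (n : ℝ) (hn : n > σ ^ 2 / (2 * μ * ε) * Real.log ((μ + ε) / (μ - ε))) :
    d * γ * σ * Real.sqrt (2 / (n * Real.pi)) *
        (Real.exp (-(n * (ε + μ) ^ 2) / (2 * σ ^ 2)) +
          Real.exp (-(n * (ε - μ) ^ 2) / (2 * σ ^ 2)) -
          Real.exp (-(n * μ ^ 2) / (2 * σ ^ 2)))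
      > d * γ * σ * Real.sqrt (2 / (n * Real.pi)) * Real.exp (-(n * μ ^ 2) / (2 * σ ^ 2)) := by
  have hμ : 0 < μ := hε0.trans hεμ
  have hlog_pos : 0 < log ((μ + ε) / (μ - ε)) :=
    log_pos ((one_lt_div (by linarith)).2 (by linarith))
  have hn_pos : 0 < n := lt_trans (by positivity) hn
  have hlog : log ((μ + ε) / (μ - ε)) < 4 * (n / (2 * σ ^ 2)) * μ * ε := by
    rw [gt_iff_lt, div_mul_eq_mul_div, div_lt_iff₀ (by positivity)] at hn
    rw [show 4 * (n / (2 * σ ^ 2)) * μ * ε = n * (2 * μ * ε) / σ ^ 2 by field_simp; ring,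
      lt_div_iff₀ (by positivity)]
    linarith
  have hgap := strictMonoOn_gaussPair (by positivity) hεμ hlog
    ⟨le_rfl, hε0.le⟩ ⟨hε0.le, le_rfl⟩ hε0
  rw [gaussPair_zero, gaussPair] at hgap
  have hprefactor : 0 < d * γ * σ * √(2 / (n * π)) := by
    have : (0 : ℝ) < d := Nat.cast_pos.mpr hd
    have : 0 < √(2 / (n * π)) := sqrt_pos.2 (by positivity)
    positivity
  refine mul_lt_mul_of_pos_left ?_ hprefactor
  ring_nf at hgap ⊢
  linarith

/-- If `0 < ε < μ` and `n > (σ²/(2με))·log((μ+ε)/(μ−ε))`, then `r_rob(n, ε) > r_std(n)`. -/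
theorem r_rob_gt_r_std (d : ℕ) (hd : 0 < d) (μ σ γ ε : ℝ)
    (hμ : 0 < μ) (hσ : 0 < σ) (hγ : 0 < γ) (hε0 : 0 < ε) (hεμ : ε < μ)
    (n : ℝ) (hn : n > σ ^ 2 / (2 * μ * ε) * Real.log ((μ + ε) / (μ - ε))) :
    d * γ * σ * Real.sqrt (2 / (n * Real.pi)) *
        (Real.exp (-(n * (ε + μ) ^ 2) / (2 * σ ^ 2)) +
          Real.exp (-(n * (ε - μ) ^ 2) / (2 * σ ^ 2)) -
          Real.exp (-(n * μ ^ 2) / (2 * σ ^ 2)))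
      > d * γ * σ * Real.sqrt (2 / (n * Real.pi)) * Real.exp (-(n * μ ^ 2) / (2 * σ ^ 2)) :=
  r_rob_gt_r_std_general d hd μ σ γ ε hσ hγ hε0 hεμ n hn
end
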